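/- Let b = 0 (so γ = 1). Then the momentum of the soliton with parameters (ω, c) = (1, 2s) satisfies P(φ_{1,2s}) > 0 for every s ∈ (−1, 1), and P(φ_{1,2}) = 0 for the algebraic soliton (s = 1). -/

import Mathlib

open MeasureTheory Real Set

/-- The soliton profile of the derivative NLS after gauge transformation:
the algebraic profile when `c = 2√ω`, the bright profile when `-2√ω < c < 2√ω`. -/
noncomputable def Phi (γ ω c x : ℝ) : ℝ :=
  if c = 2 * Real.sqrt ω then
    Real.sqrt (4 * c / ((c * x) ^ 2 + γ))
  else
    Real.sqrt (2 * (4 * ω - c ^ 2) /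
      (Real.sqrt (c ^ 2 + γ * (4 * ω - c ^ 2)) * Real.cosh (Real.sqrt (4 * ω - c ^ 2) * x) - c))

/-- The complex soliton profile
`φ_{ω,c}(x) = exp(i((c/2)x - (1/4)∫_{-∞}^x Φ²)) Φ(x)`. -/
noncomputable def solp (γ ω c x : ℝ) : ℂ :=
  Complex.exp (Complex.I *
      Complex.ofReal (c / 2 * x - 1 / 4 * ∫ y in Iic x, (Phi γ ω c y) ^ 2)) *
    Complex.ofReal (Phi γ ω c x)

/-- The momentum `P(φ_{ω,c}) = Re ∫_ℝ i φ' conj(φ)`. -/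
noncomputable def solMom (γ ω c : ℝ) : ℝ :=
  (∫ x : ℝ, Complex.I * deriv (fun y => solp γ ω c y) x *
    (starRingEnd ℂ) (solp γ ω c x)).re

/-!
Write `Φ² = g`. The phase of `φ` has derivative `c/2 - g/4`, so the momentum density
`i φ' conj φ` equals `(g²/4 - c g/2) + i g'/2` and `P = ∫ (g²/4 - c g/2)`. For both profiles
with `γ = ω = 1` this integrand has an explicit bounded primitive `H` satisfying `g' = -g H`
(which makes every integrand a bounded multiple of `g`): with `k = √(4 - c²)`,
`g = 2k²/(2 cosh(kx) - c)`, `H = 2k sinh(kx)/(2 cosh(kx) - c)` for the bright soliton and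
`g = 8/(4x² + 1)`, `H = 8x/(4x² + 1)` for the algebraic one. Hence `P = H(∞) - H(-∞)`, which is
`2k > 0`, resp. `0`.
-/

open Filter Topology

lemma hasDerivAt_integral_Iic {E : Type*} [NormedAddCommGroup E] [NormedSpace ℝ E]
    [CompleteSpace E] {g : ℝ → E} (hgi : Integrable g) (hgc : Continuous g) (x : ℝ) :
    HasDerivAt (fun t => ∫ y in Iic t, g y) (g x) x := by
  have hsplit : (fun t => ∫ y in Iic t, g y) =
      fun t => (∫ y in Iic 0, g y) + ∫ y in (0 : ℝ)..t, g y := by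
    funext t
    rw [← intervalIntegral.integral_Iic_sub_Iic hgi.integrableOn hgi.integrableOn,
      add_sub_cancel]
  rw [hsplit]
  exact (intervalIntegral.integral_hasDerivAt_right hgi.intervalIntegrable
    (hgc.stronglyMeasurableAtFilter _ _) hgc.continuousAt).const_add _

lemma I_mul_deriv_mul_conj_of_polar {θ r : ℝ → ℝ} {θ' r' x : ℝ}
    (hθ : HasDerivAt θ θ' x) (hr : HasDerivAt r r' x) :
    Complex.I * deriv (fun y => Complex.exp (Complex.I * θ y) * r y) x *
        starRingEnd ℂ (Complex.exp (Complex.I * θ x) * r x) =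
      ((-(θ' * r x ^ 2) : ℝ) : ℂ) + Complex.I * ((r x * r' : ℝ) : ℂ) := by
  have hd : HasDerivAt (fun y => Complex.exp (Complex.I * θ y) * r y)
      (Complex.exp (Complex.I * θ x) * (Complex.I * θ') * r x +
        Complex.exp (Complex.I * θ x) * r') x :=
    ((hθ.ofReal_comp.const_mul Complex.I).cexp).mul hr.ofReal_comp
  have hunit : Complex.exp (Complex.I * θ x) * Complex.exp (-Complex.I * θ x) = 1 := by
    rw [← Complex.exp_add, neg_mul, add_neg_cancel, Complex.exp_zero]
  rw [hd.deriv, map_mul, ← Complex.exp_conj, map_mul, Complex.conj_I, Complex.conj_ofReal,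
    Complex.conj_ofReal]
  push_cast
  linear_combination (Complex.I * θ' * Complex.I * r x ^ 2 + Complex.I * r' * r x) * hunit
    + (θ' * r x ^ 2) * Complex.I_sq

lemma Phi_nonneg (γ ω c x : ℝ) : 0 ≤ Phi γ ω c x := by
  unfold Phi; split <;> exact sqrt_nonneg _

theorem solMom_eq_integral {γ ω c : ℝ} {g g' : ℝ → ℝ} (hΦ : ∀ x, Phi γ ω c x ^ 2 = g x)
    (hpos : ∀ x, 0 < g x) (hg : ∀ x, HasDerivAt g (g' x) x) (hgi : Integrable g)
    (hui : Integrable fun x => g x ^ 2 / 4 - c / 2 * g x) (hg'i : Integrable g') :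
    solMom γ ω c = ∫ x, (g x ^ 2 / 4 - c / 2 * g x) := by
  have hgc : Continuous g := continuous_iff_continuousAt.2 fun x => (hg x).continuousAt
  set θ : ℝ → ℝ := fun x => c / 2 * x - 1 / 4 * ∫ y in Iic x, g y
  have hθ : ∀ x, HasDerivAt θ (c / 2 - g x / 4) x := fun x => by
    refine (((hasDerivAt_id x).const_mul (c / 2)).sub
      ((hasDerivAt_integral_Iic hgi hgc x).const_mul (1 / 4))).congr_deriv ?_
    ring
  have hsolp : solp γ ω c = fun x => Complex.exp (Complex.I * θ x) * (√(g x) : ℝ) := by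
    funext x
    rw [solp, show (fun y => Phi γ ω c y ^ 2) = g from funext hΦ, ← hΦ x,
      sqrt_sq (Phi_nonneg γ ω c x)]
  have hdensity : ∀ x, Complex.I * deriv (solp γ ω c) x * starRingEnd ℂ (solp γ ω c x) =
      ((g x ^ 2 / 4 - c / 2 * g x : ℝ) : ℂ) + Complex.I * ((g' x / 2 : ℝ) : ℂ) := fun x => by
    rw [hsolp, I_mul_deriv_mul_conj_of_polar (hθ x) ((hg x).sqrt (hpos x).ne'),
      sq_sqrt (hpos x).le]
    have hs : √(g x) ≠ 0 := (sqrt_pos.2 (hpos x)).ne'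
    rw [show √(g x) * (g' x / (2 * √(g x))) = g' x / 2 by field_simp,
      show -((c / 2 - g x / 4) * g x) = g x ^ 2 / 4 - c / 2 * g x by ring]
  rw [solMom, integral_congr_ae (.of_forall hdensity),
    integral_add hui.ofReal ((hg'i.div_const 2).ofReal.const_mul _), integral_const_mul,
    integral_complex_ofReal, integral_complex_ofReal]
  simp

theorem solMom_eq_sub_of_hasDerivAt {γ ω c a b M N : ℝ} {g H : ℝ → ℝ}
    (hΦ : ∀ x, Phi γ ω c x ^ 2 = g x) (hpos : ∀ x, 0 < g x)
    (hg : ∀ x, HasDerivAt g (-(g x * H x)) x)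
    (hH : ∀ x, HasDerivAt H (g x ^ 2 / 4 - c / 2 * g x) x)
    (hgi : Integrable g) (hgM : ∀ x, g x ≤ M) (hHN : ∀ x, |H x| ≤ N)
    (hbot : Tendsto H atBot (𝓝 a)) (htop : Tendsto H atTop (𝓝 b)) :
    solMom γ ω c = b - a := by
  have hgc : Continuous g := continuous_iff_continuousAt.2 fun x => (hg x).continuousAt
  have hHc : Continuous H := continuous_iff_continuousAt.2 fun x => (hH x).continuousAt
  have hgg : Integrable fun x => g x * g x := hgi.bdd_mul hgc.aestronglyMeasurable
    (.of_forall fun x => by rw [norm_of_nonneg (hpos x).le]; exact hgM x)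
  have hHg : Integrable fun x => H x * g x := hgi.bdd_mul hHc.aestronglyMeasurable
    (.of_forall fun x => by rw [norm_eq_abs]; exact hHN x)
  have hui : Integrable fun x => g x ^ 2 / 4 - c / 2 * g x := by
    refine ((hgg.div_const 4).sub (hgi.const_mul (c / 2))).congr (.of_forall fun x => ?_)
    simp [sq]
  have hg'i : Integrable fun x => -(g x * H x) := by
    refine hHg.neg.congr (.of_forall fun x => ?_)
    simp [mul_comm]
  rw [solMom_eq_integral hΦ hpos hg hgi hui hg'i,
    integral_of_hasDerivAt_of_tendsto hH hui hbot htop]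

lemma tendsto_atBot_of_odd {H : ℝ → ℝ} {b : ℝ} (hodd : ∀ x, H (-x) = -H x)
    (h : Tendsto H atTop (𝓝 b)) : Tendsto H atBot (𝓝 (-b)) :=
  ((h.comp tendsto_neg_atBot_atTop).neg).congr fun x => by simp [hodd]

lemma abs_sinh_le_cosh (u : ℝ) : |sinh u| ≤ cosh u := by
  rw [abs_sinh, ← cosh_abs]
  exact (sinh_lt_cosh _).le

lemma one_add_sq_le_four_mul_cosh (u : ℝ) : 1 + u ^ 2 ≤ 4 * cosh u := by
  rw [← cosh_abs, cosh_eq]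
  nlinarith [quadratic_le_exp_of_nonneg (abs_nonneg u), exp_pos (-|u|), sq_abs u, abs_nonneg u]

lemma two_sub_abs_mul_cosh_le (c u : ℝ) : (2 - |c|) * cosh u ≤ 2 * cosh u - c := by
  nlinarith [one_le_cosh u, le_abs_self c, abs_nonneg c]

lemma hasDerivAt_two_mul_cosh_sub (k c x : ℝ) :
    HasDerivAt (fun x => 2 * cosh (k * x) - c) (2 * k * sinh (k * x)) x := by
  refine ((((hasDerivAt_id x).const_mul k).cosh).const_mul 2 |>.sub_const c).congr_deriv ?_
  simp only [id, mul_one]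
  ring

section Bright

variable {k c : ℝ}

noncomputable def brightSq (k c x : ℝ) : ℝ := 2 * k ^ 2 / (2 * cosh (k * x) - c)

noncomputable def brightPrim (k c x : ℝ) : ℝ := 2 * k * sinh (k * x) / (2 * cosh (k * x) - c)

lemma two_mul_cosh_sub_pos (hc : |c| < 2) (u : ℝ) : 0 < 2 * cosh u - c :=
  (mul_pos (by linarith) (cosh_pos u)).trans_le (two_sub_abs_mul_cosh_le c u)

lemma Phi_one_one_sq_of_abs_lt (hc : |c| < 2) (x : ℝ) :
    Phi 1 1 c x ^ 2 = brightSq √(4 - c ^ 2) c x := by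
  have hne : c ≠ 2 * √1 := by
    rw [sqrt_one]
    rintro rfl
    norm_num at hc
  have h2 : √(c ^ 2 + 1 * (4 * 1 - c ^ 2)) = 2 := by
    rw [show c ^ 2 + 1 * (4 * 1 - c ^ 2) = 2 ^ 2 by ring, sqrt_sq zero_le_two]
  have hk : √(4 - c ^ 2) ^ 2 = 4 - c ^ 2 :=
    sq_sqrt (by nlinarith [sq_abs c, abs_nonneg c])
  rw [Phi, if_neg hne, h2, mul_one, brightSq, hk,
    sq_sqrt (div_nonneg (by nlinarith [sq_abs c, abs_nonneg c])
      (two_mul_cosh_sub_pos hc _).le)]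

lemma brightSq_pos (hc : |c| < 2) (hk : k ≠ 0) (x : ℝ) : 0 < brightSq k c x :=
  div_pos (by positivity) (two_mul_cosh_sub_pos hc _)

lemma brightSq_le (hc : |c| < 2) (x : ℝ) : brightSq k c x ≤ 2 * k ^ 2 / (2 - |c|) :=
  div_le_div_of_nonneg_left (by positivity) (by linarith)
    (by nlinarith [two_sub_abs_mul_cosh_le c (k * x), one_le_cosh (k * x)])

lemma abs_brightPrim_le (hc : |c| < 2) (x : ℝ) : |brightPrim k c x| ≤ 2 * |k| / (2 - |c|) := by
  have hD := two_mul_cosh_sub_pos hc (k * x)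
  rw [brightPrim, abs_div, abs_of_pos hD, div_le_div_iff₀ hD (by linarith), abs_mul, abs_mul,
    abs_two]
  have hsinh : (2 - |c|) * |sinh (k * x)| ≤ 2 * cosh (k * x) - c :=
    (mul_le_mul_of_nonneg_left (abs_sinh_le_cosh _) (by linarith)).trans
      (two_sub_abs_mul_cosh_le c _)
  nlinarith [mul_le_mul_of_nonneg_left hsinh (abs_nonneg k)]

lemma hasDerivAt_brightSq (hc : |c| < 2) (x : ℝ) :
    HasDerivAt (brightSq k c) (-(brightSq k c x * brightPrim k c x)) x := by
  have hD := (two_mul_cosh_sub_pos hc (k * x)).ne'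
  refine ((hasDerivAt_const x (2 * k ^ 2)).div (hasDerivAt_two_mul_cosh_sub k c x)
    hD).congr_deriv ?_
  rw [brightSq, brightPrim]
  field_simp
  ring

lemma hasDerivAt_brightPrim (hc : |c| < 2) (hk : k ^ 2 + c ^ 2 = 4) (x : ℝ) :
    HasDerivAt (brightPrim k c) (brightSq k c x ^ 2 / 4 - c / 2 * brightSq k c x) x := by
  have hD := (two_mul_cosh_sub_pos hc (k * x)).ne'
  have hnum : HasDerivAt (fun x => 2 * k * sinh (k * x)) (2 * k * (k * cosh (k * x))) x := by
    refine ((((hasDerivAt_id x).const_mul k).sinh).const_mul (2 * k)).congr_deriv ?_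
    simp only [id, mul_one]
    ring
  refine (hnum.div (hasDerivAt_two_mul_cosh_sub k c x) hD).congr_deriv ?_
  have hrhs : brightSq k c x ^ 2 / 4 - c / 2 * brightSq k c x =
      k ^ 2 * (k ^ 2 - c * (2 * cosh (k * x) - c)) / (2 * cosh (k * x) - c) ^ 2 := by
    rw [brightSq]
    field_simp
    ring
  rw [hrhs]
  congr 1
  linear_combination (4 * k ^ 2) * cosh_sq (k * x) - k ^ 2 * hk

lemma integrable_brightSq (hc : |c| < 2) (hk : k ≠ 0) : Integrable (brightSq k c) := by
  have hcont : Continuous (brightSq k c) :=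
    continuous_iff_continuousAt.2 fun x => (hasDerivAt_brightSq hc x).continuousAt
  refine ((integrable_inv_one_add_sq.comp_mul_left' hk).const_mul
    (8 * k ^ 2 / (2 - |c|))).mono' hcont.aestronglyMeasurable (.of_forall fun x => ?_)
  have hD := two_mul_cosh_sub_pos hc (k * x)
  rw [norm_of_nonneg (brightSq_pos hc hk x).le, brightSq, ← div_eq_mul_inv,
    div_div, div_le_div_iff₀ hD (by nlinarith [sq_nonneg (k * x), abs_nonneg c])]
  have hbound : (2 - |c|) * (1 + (k * x) ^ 2) ≤ 4 * (2 * cosh (k * x) - c) := by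
    nlinarith [mul_le_mul_of_nonneg_left (one_add_sq_le_four_mul_cosh (k * x))
      (by linarith : (0 : ℝ) ≤ 2 - |c|), two_sub_abs_mul_cosh_le c (k * x)]
  nlinarith [mul_le_mul_of_nonneg_left hbound (sq_nonneg k)]

lemma brightPrim_neg (x : ℝ) : brightPrim k c (-x) = -brightPrim k c x := by
  simp only [brightPrim, mul_neg, sinh_neg, cosh_neg, neg_div]

lemma tendsto_brightPrim_atTop (hk : 0 < k) : Tendsto (brightPrim k c) atTop (𝓝 k) := by
  have hq : Tendsto (fun x => exp (-(k * x))) atTop (𝓝 0) :=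
    tendsto_exp_atBot.comp (tendsto_neg_atTop_atBot.comp (tendsto_id.const_mul_atTop hk))
  have heq : brightPrim k c = fun x =>
      k * (1 - exp (-(k * x)) ^ 2) / (1 + exp (-(k * x)) ^ 2 - c * exp (-(k * x))) := by
    funext x
    have he := exp_pos (k * x)
    rw [brightPrim, cosh_eq, sinh_eq, exp_neg,
      ← mul_div_mul_left _ _ (inv_ne_zero he.ne')]
    congr 1 <;> field_simp
  rw [heq]
  convert (((hq.pow 2).const_sub 1).const_mul k).div
    (((hq.pow 2).const_add 1).sub (hq.const_mul c)) (by norm_num) using 2 <;> simp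

theorem solMom_one_one_of_abs_lt (hc : |c| < 2) : solMom 1 1 c = 2 * √(4 - c ^ 2) := by
  have hk0 : 0 < √(4 - c ^ 2) := sqrt_pos.2 (by nlinarith [sq_abs c, abs_nonneg c])
  have hk : √(4 - c ^ 2) ^ 2 + c ^ 2 = 4 := by
    rw [sq_sqrt (by nlinarith [sq_abs c, abs_nonneg c])]
    ring
  have hlim := tendsto_brightPrim_atTop (c := c) hk0
  rw [solMom_eq_sub_of_hasDerivAt (Phi_one_one_sq_of_abs_lt hc) (brightSq_pos hc hk0.ne')
    (hasDerivAt_brightSq hc) (hasDerivAt_brightPrim hc hk) (integrable_brightSq hc hk0.ne')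
    (brightSq_le hc) (abs_brightPrim_le hc) (tendsto_atBot_of_odd brightPrim_neg hlim) hlim]
  ring

end Bright

section Algebraic

noncomputable def algebraicSq (x : ℝ) : ℝ := 8 / (4 * x ^ 2 + 1)

noncomputable def algebraicPrim (x : ℝ) : ℝ := 8 * x / (4 * x ^ 2 + 1)

lemma Phi_one_one_two_sq (x : ℝ) : Phi 1 1 2 x ^ 2 = algebraicSq x := by
  rw [Phi, if_pos (by rw [sqrt_one, mul_one]), sq_sqrt (by positivity), algebraicSq]
  ring_nf

lemma algebraicSq_pos (x : ℝ) : 0 < algebraicSq x := by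
  unfold algebraicSq
  positivity

lemma algebraicSq_le (x : ℝ) : algebraicSq x ≤ 8 :=
  div_le_self (by norm_num) (by nlinarith [sq_nonneg x])

lemma abs_algebraicPrim_le (x : ℝ) : |algebraicPrim x| ≤ 2 := by
  have hD : (0 : ℝ) < 4 * x ^ 2 + 1 := by positivity
  rw [algebraicPrim, abs_div, abs_of_pos hD, div_le_iff₀ hD, abs_mul,
    abs_of_pos (by norm_num : (0 : ℝ) < 8)]
  nlinarith [sq_nonneg (2 * |x| - 1), sq_abs x]

lemma hasDerivAt_four_mul_sq_add_one (x : ℝ) :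
    HasDerivAt (fun x : ℝ => 4 * x ^ 2 + 1) (8 * x) x := by
  refine (((hasDerivAt_pow 2 x).const_mul 4).add_const 1).congr_deriv ?_
  ring

lemma hasDerivAt_algebraicSq (x : ℝ) :
    HasDerivAt algebraicSq (-(algebraicSq x * algebraicPrim x)) x := by
  refine ((hasDerivAt_const x (8 : ℝ)).div (hasDerivAt_four_mul_sq_add_one x)
    (by positivity)).congr_deriv ?_
  rw [algebraicSq, algebraicPrim]
  field_simp
  ring

lemma hasDerivAt_algebraicPrim (x : ℝ) :
    HasDerivAt algebraicPrim (algebraicSq x ^ 2 / 4 - 2 / 2 * algebraicSq x) x := by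
  refine (((hasDerivAt_id' x).const_mul 8).div (hasDerivAt_four_mul_sq_add_one x)
    (by positivity)).congr_deriv ?_
  rw [algebraicSq]
  field_simp
  ring

lemma integrable_algebraicSq : Integrable algebraicSq := by
  refine ((integrable_inv_one_add_sq.comp_mul_left' two_ne_zero).const_mul 8).congr
    (.of_forall fun x => ?_)
  simp only [algebraicSq]
  field_simp
  ring

lemma algebraicPrim_neg (x : ℝ) : algebraicPrim (-x) = -algebraicPrim x := by
  simp only [algebraicPrim, neg_sq, mul_neg, neg_div]

lemma tendsto_algebraicPrim_atTop : Tendsto algebraicPrim atTop (𝓝 0) := by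
  have heq : (fun x => 8 * x⁻¹ / (4 + x⁻¹ ^ 2)) =ᶠ[atTop] algebraicPrim := by
    filter_upwards [eventually_gt_atTop 0] with x hx
    rw [algebraicPrim]
    field_simp
  have hinv : Tendsto (fun x : ℝ => x⁻¹) atTop (𝓝 0) := tendsto_inv_atTop_zero
  have hlim := (hinv.const_mul 8).div ((hinv.pow 2).const_add 4)
    (by norm_num : (4 : ℝ) + 0 ^ 2 ≠ 0)
  rw [mul_zero, zero_div] at hlim
  exact hlim.congr' heq

theorem solMom_one_one_two : solMom 1 1 2 = 0 := by
  rw [solMom_eq_sub_of_hasDerivAt Phi_one_one_two_sq algebraicSq_pos hasDerivAt_algebraicSq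
    hasDerivAt_algebraicPrim integrable_algebraicSq algebraicSq_le abs_algebraicPrim_le
    (tendsto_atBot_of_odd algebraicPrim_neg tendsto_algebraicPrim_atTop)
    tendsto_algebraicPrim_atTop]
  norm_num

end Algebraic

/-- For `b = 0` (so `γ = 1`): `P(φ_{1,2s}) > 0` for `s ∈ (-1,1)`, and the algebraic
soliton has vanishing momentum, `P(φ_{1,2}) = 0`. -/
theorem stmt_12 (b γ : ℝ) (hb : b = 0) (hγ : γ = 1 + 16 / 3 * b) :
    (∀ s ∈ Ioo (-1 : ℝ) 1, 0 < solMom γ 1 (2 * s)) ∧ solMom γ 1 2 = 0 := by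
  obtain rfl : γ = 1 := by rw [hγ, hb]; ring
  refine ⟨fun s hs => ?_, solMom_one_one_two⟩
  have hc : |2 * s| < 2 := by
    rw [abs_mul, abs_two]
    linarith [abs_lt.2 hs]
  rw [solMom_one_one_of_abs_lt hc]
  have : 0 < 4 - (2 * s) ^ 2 := by nlinarith [hs.1, hs.2]
  positivity
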